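/- arXiv:1901.00904 — 3 statements merged into one kernel-verified Lean document; each statement's English description precedes it below -/
import Mathlib

section
/- Let R be a commutative ring, m ≥ 1, and let A be a 2m×2m matrix over R with m×m blocks A11, A12, A21, A22, and Δ := det(A11) • A22 − A21 · adj(A11) · A12. Then det(A11)^(m−1) • B21 = − adj(Δ) · A21 · adj(A11), where B21 denotes the bottom-left m×m block of the adjugate matrix adj(A). -/
/-!
If `A` and its top-left block `A₁₁` are invertible, write `S = A₂₂ - A₂₁ A₁₁⁻¹ A₁₂`, so that
`Δ = det A₁₁ • S`, `det A = det A₁₁ * det S` and `adj X = det X • X⁻¹` for `X = A, A₁₁, S`.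
The block-inverse formula `(A⁻¹)₂₁ = -S⁻¹ A₂₁ A₁₁⁻¹` then makes both sides equal to
`-(det A₁₁ ^ m * det S) • S⁻¹ A₂₁ A₁₁⁻¹`. Both sides commute with ring homomorphisms, so the
identity for the generic matrix over `ℤ[xᵢⱼ]`, obtained inside its fraction field where both
determinants are nonzero, specializes to every matrix over every commutative ring.
-/

open Matrix

namespace Matrix

section Map

variable {l m n o α β : Type*} (f : α → β) (A : Matrix (n ⊕ o) (l ⊕ m) α)

@[simp] theorem toBlocks₁₁_map : (A.map f).toBlocks₁₁ = A.toBlocks₁₁.map f := rfl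
@[simp] theorem toBlocks₁₂_map : (A.map f).toBlocks₁₂ = A.toBlocks₁₂.map f := rfl
@[simp] theorem toBlocks₂₁_map : (A.map f).toBlocks₂₁ = A.toBlocks₂₁.map f := rfl
@[simp] theorem toBlocks₂₂_map : (A.map f).toBlocks₂₂ = A.toBlocks₂₂.map f := rfl

theorem toBlocks₂₁_smul {γ : Type*} [SMul γ α] (c : γ) (B : Matrix (n ⊕ o) (l ⊕ m) α) :
    (c • B).toBlocks₂₁ = c • B.toBlocks₂₁ := rfl

end Map

variable {n p R S : Type*} [Fintype n] [DecidableEq n] [CommRing R] [CommRing S]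

theorem adjugate_map (f : R →+* S) (A : Matrix n n R) : A.adjugate.map f = (A.map f).adjugate :=
  f.map_adjugate A

theorem adjugate_eq_det_smul_invOf (A : Matrix n n R) [Invertible A] :
    A.adjugate = A.det • ⅟A := by
  let := A.detInvertibleOfInvertible
  rw [invOf_eq, smul_smul, mul_invOf_self, one_smul]

def ffSchurComplement (A : Matrix (n ⊕ p) (n ⊕ p) R) : Matrix p p R :=
  A.toBlocks₁₁.det • A.toBlocks₂₂ - A.toBlocks₂₁ * A.toBlocks₁₁.adjugate * A.toBlocks₁₂

theorem ffSchurComplement_map (f : R →+* S) (A : Matrix (n ⊕ p) (n ⊕ p) R) :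
    A.ffSchurComplement.map f = (A.map f).ffSchurComplement := by
  simp [ffSchurComplement, Matrix.map_sub, Matrix.map_mul, Matrix.map_smul', adjugate_map,
    f.map_det]

theorem ffSchurComplement_fromBlocks_eq_det_smul (A₁₁ : Matrix n n R) (A₁₂ : Matrix n p R)
    (A₂₁ : Matrix p n R) (A₂₂ : Matrix p p R) [Invertible A₁₁] :
    (fromBlocks A₁₁ A₁₂ A₂₁ A₂₂).ffSchurComplement = A₁₁.det • (A₂₂ - A₂₁ * ⅟A₁₁ * A₁₂) := by
  rw [ffSchurComplement, toBlocks_fromBlocks₁₁, toBlocks_fromBlocks₁₂, toBlocks_fromBlocks₂₁,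
    toBlocks_fromBlocks₂₂, adjugate_eq_det_smul_invOf A₁₁, smul_sub, Matrix.mul_smul,
    Matrix.smul_mul]

variable [Fintype p] [DecidableEq p]

theorem map_det_pow_smul_adjugate_toBlocks₂₁ (f : R →+* S) (A : Matrix (n ⊕ p) (n ⊕ p) R)
    (k : ℕ) :
    (A.toBlocks₁₁.det ^ k • A.adjugate.toBlocks₂₁).map f =
      (A.map f).toBlocks₁₁.det ^ k • (A.map f).adjugate.toBlocks₂₁ := by
  rw [Matrix.map_smulₛₗ f f _ (map_mul f _), ← toBlocks₂₁_map, adjugate_map, map_pow, f.map_det]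
  rfl

theorem map_adjugate_ffSchurComplement_mul (f : R →+* S) (A : Matrix (n ⊕ p) (n ⊕ p) R) :
    (A.ffSchurComplement.adjugate * A.toBlocks₂₁ * A.toBlocks₁₁.adjugate).map f =
      (A.map f).ffSchurComplement.adjugate * (A.map f).toBlocks₂₁ *
        (A.map f).toBlocks₁₁.adjugate := by
  simp [Matrix.map_mul, ffSchurComplement_map, adjugate_map]

theorem det_pow_smul_adjugate_toBlocks₂₁_of_invertible (A : Matrix (n ⊕ p) (n ⊕ p) R)
    [Invertible A] [Invertible A.toBlocks₁₁] :
    A.toBlocks₁₁.det ^ (Fintype.card p - 1) • A.adjugate.toBlocks₂₁ =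
      -(A.ffSchurComplement.adjugate * A.toBlocks₂₁ * A.toBlocks₁₁.adjugate) := by
  obtain ⟨A₁₁, A₁₂, A₂₁, A₂₂, rfl⟩ : ∃ A₁₁ A₁₂ A₂₁ A₂₂, A = fromBlocks A₁₁ A₁₂ A₂₁ A₂₂ :=
    ⟨_, _, _, _, (fromBlocks_toBlocks A).symm⟩
  let : Invertible A₁₁ := ‹Invertible (fromBlocks A₁₁ A₁₂ A₂₁ A₂₂).toBlocks₁₁›
  let : Invertible (A₂₂ - A₂₁ * ⅟A₁₁ * A₁₂) := invertibleOfFromBlocks₁₁Invertible _ _ _ _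
  rw [ffSchurComplement_fromBlocks_eq_det_smul, adjugate_smul,
    adjugate_eq_det_smul_invOf (fromBlocks _ _ _ _), det_fromBlocks₁₁, toBlocks_fromBlocks₂₁,
    toBlocks_fromBlocks₁₁, adjugate_eq_det_smul_invOf A₁₁, adjugate_eq_det_smul_invOf (A₂₂ - _),
    toBlocks₂₁_smul, invOf_fromBlocks₁₁_eq, toBlocks_fromBlocks₂₁]
  simp only [Matrix.smul_mul, Matrix.mul_smul, smul_smul, smul_neg]
  congr 2
  ring

theorem det_pow_smul_adjugate_toBlocks₂₁_of_det_ne_zero [IsDomain R]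
    (A : Matrix (n ⊕ p) (n ⊕ p) R) (hA : A.det ≠ 0) (hA₁₁ : A.toBlocks₁₁.det ≠ 0) :
    A.toBlocks₁₁.det ^ (Fintype.card p - 1) • A.adjugate.toBlocks₂₁ =
      -(A.ffSchurComplement.adjugate * A.toBlocks₂₁ * A.toBlocks₁₁.adjugate) := by
  let f := algebraMap R (FractionRing R)
  have hf : Function.Injective f := IsFractionRing.injective R (FractionRing R)
  have isUnit_map {r : R} (hr : r ≠ 0) : IsUnit (f r) :=
    isUnit_iff_ne_zero.mpr ((map_ne_zero_iff f hf).mpr hr)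
  let : Invertible (A.map f) := invertibleOfIsUnitDet _ (f.map_det A ▸ isUnit_map hA)
  let : Invertible (A.map f).toBlocks₁₁ :=
    invertibleOfIsUnitDet _ (f.map_det A.toBlocks₁₁ ▸ isUnit_map hA₁₁)
  apply Matrix.map_injective hf
  dsimp only
  rw [Matrix.map_neg _ (map_neg f), map_det_pow_smul_adjugate_toBlocks₂₁,
    map_adjugate_ffSchurComplement_mul]
  exact det_pow_smul_adjugate_toBlocks₂₁_of_invertible _

theorem det_toBlocks₁₁_mvPolynomialX_ne_zero (R : Type*) [CommRing R] [Nontrivial R] :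
    (mvPolynomialX (n ⊕ p) (n ⊕ p) R).toBlocks₁₁.det ≠ 0 := by
  intro h
  have := congrArg (MvPolynomial.eval fun q => (1 : Matrix (n ⊕ p) (n ⊕ p) R) q.1 q.2) h
  rw [RingHom.map_det, map_zero, RingHom.mapMatrix_apply, ← toBlocks₁₁_map,
    ← RingHom.mapMatrix_apply, mvPolynomialX_mapMatrix_eval, ← fromBlocks_one,
    toBlocks_fromBlocks₁₁, det_one] at this
  exact one_ne_zero this

theorem det_pow_smul_adjugate_toBlocks₂₁ (A : Matrix (n ⊕ p) (n ⊕ p) R) :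
    A.toBlocks₁₁.det ^ (Fintype.card p - 1) • A.adjugate.toBlocks₂₁ =
      -(A.ffSchurComplement.adjugate * A.toBlocks₂₁ * A.toBlocks₁₁.adjugate) := by
  have hgeneric := det_pow_smul_adjugate_toBlocks₂₁_of_det_ne_zero
    (mvPolynomialX (n ⊕ p) (n ⊕ p) ℤ) (det_mvPolynomialX_ne_zero _ ℤ)
    (det_toBlocks₁₁_mvPolynomialX_ne_zero ℤ)
  let φ : MvPolynomial ((n ⊕ p) × (n ⊕ p)) ℤ →+* R :=
    (MvPolynomial.aeval fun q : (n ⊕ p) × (n ⊕ p) => A q.1 q.2).toRingHom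
  have hφ : (mvPolynomialX (n ⊕ p) (n ⊕ p) ℤ).map φ = A := mvPolynomialX_mapMatrix_aeval ℤ A
  have := congrArg (Matrix.map · φ) hgeneric
  simpa only [Matrix.map_neg _ (map_neg φ), map_det_pow_smul_adjugate_toBlocks₂₁,
    map_adjugate_ffSchurComplement_mul, hφ] using this

end Matrix

theorem ffSchur_adjugate_block21_general {R : Type*} [CommRing R] (m : ℕ)
    (A11 A12 A21 A22 : Matrix (Fin m) (Fin m) R) :
    A11.det ^ (m - 1) • (Matrix.fromBlocks A11 A12 A21 A22).adjugate.toBlocks₂₁ =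
      -((A11.det • A22 - A21 * A11.adjugate * A12).adjugate * A21 * A11.adjugate) := by
  simpa [ffSchurComplement] using det_pow_smul_adjugate_toBlocks₂₁ (fromBlocks A11 A12 A21 A22)

/-- For a commutative ring `R`, `m ≥ 1`, and a `2m × 2m` matrix `A` over `R`
with `m × m` blocks `A11, A12, A21, A22`, letting
`Δ = det(A11) • A22 - A21 * adj(A11) * A12`, the bottom-left block `B21` of `adj(A)`
satisfies `det(A11) ^ (m - 1) • B21 = - adj(Δ) * A21 * adj(A11)`. -/
theorem ffSchur_adjugate_block21 {R : Type*} [CommRing R] (m : ℕ) (hm : 1 ≤ m)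
    (A11 A12 A21 A22 : Matrix (Fin m) (Fin m) R) :
    A11.det ^ (m - 1) • (Matrix.fromBlocks A11 A12 A21 A22).adjugate.toBlocks₂₁ =
      -((A11.det • A22 - A21 * A11.adjugate * A12).adjugate * A21 * A11.adjugate) :=
  ffSchur_adjugate_block21_general m A11 A12 A21 A22
end

section
/- Let R be a commutative ring, m ≥ 1, and let A be a 2m×2m matrix over R with m×m blocks A11, A12, A21, A22, and Δ := det(A11) • A22 − A21 · adj(A11) · A12. Then det(A11)^(m−1) • B12 = − adj(A11) · A12 · adj(Δ), where B12 denotes the top-right m×m block of the adjugate matrix adj(A). -/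
/-!
Write `d = det A₁₁`, `Δ` for the fraction-free Schur complement and `B = adj A`. The right block
column of `A * B = det A • 1`, with its first row multiplied by `adj A₁₁`, gives
`d • B₁₂ = -(adj A₁₁ * A₁₂ * B₂₂)` and `Δ * B₂₂ = (d * det A) • 1`, while block elimination gives
`det Δ = d ^ (m - 1) * det A`. Multiplying by `adj Δ` and cancelling `det A` yields
`d ^ (m - 1) • B₂₂ = d • adj Δ`, and cancelling `d` then gives the theorem. Both cancellations are
valid when `d` and `det A` are non-zero-divisors, which holds for the generic matrix over
`ℤ[X_ij]`; the identity then specialises to every commutative ring.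
-/

namespace Matrix

variable {R : Type*} [CommRing R] {n : Type*} [Fintype n] [DecidableEq n]

def fractionFreeSchur (A₁₁ A₁₂ A₂₁ A₂₂ : Matrix n n R) : Matrix n n R :=
  A₁₁.det • A₂₂ - A₂₁ * A₁₁.adjugate * A₁₂

theorem right_blocks_of_fromBlocks_mul_eq_smul_one {A₁₁ A₁₂ A₂₁ A₂₂ : Matrix n n R}
    {c : R} {M : Matrix (n ⊕ n) (n ⊕ n) R} (h : fromBlocks A₁₁ A₁₂ A₂₁ A₂₂ * M = c • 1) :
    A₁₁ * M.toBlocks₁₂ + A₁₂ * M.toBlocks₂₂ = 0 ∧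
      A₂₁ * M.toBlocks₁₂ + A₂₂ * M.toBlocks₂₂ = c • 1 := by
  rw [← fromBlocks_toBlocks M, fromBlocks_multiply, ← fromBlocks_one, fromBlocks_smul,
    fromBlocks_inj, smul_zero] at h
  exact ⟨h.2.1, h.2.2.2⟩

section

variable (A₁₁ A₁₂ A₂₁ A₂₂ : Matrix n n R)

theorem fromBlocks_mul_fromBlocks_adjugate :
    fromBlocks A₁₁ A₁₂ A₂₁ A₂₂ *
        fromBlocks (A₁₁.det • 1) (-(A₁₁.adjugate * A₁₂)) 0 (A₁₁.det • 1) =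
      fromBlocks (A₁₁.det • A₁₁) 0 (A₁₁.det • A₂₁) (fractionFreeSchur A₁₁ A₁₂ A₂₁ A₂₂) := by
  rw [fromBlocks_multiply, fractionFreeSchur]
  congr 1 <;> simp [← Matrix.mul_assoc, mul_adjugate, sub_eq_neg_add]

theorem det_mul_det_fractionFreeSchur (hd : IsLeftRegular A₁₁.det) :
    A₁₁.det * (fractionFreeSchur A₁₁ A₁₂ A₂₁ A₂₂).det =
      A₁₁.det ^ Fintype.card n * (fromBlocks A₁₁ A₁₂ A₂₁ A₂₂).det := by
  have h := congrArg det (fromBlocks_mul_fromBlocks_adjugate A₁₁ A₁₂ A₂₁ A₂₂)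
  simp only [det_mul, det_fromBlocks_zero₂₁, det_fromBlocks_zero₁₂, det_smul, det_one,
    mul_one] at h
  exact hd.pow (Fintype.card n) (by linear_combination -h)

theorem det_fractionFreeSchur [Nonempty n] (hd : IsLeftRegular A₁₁.det) :
    (fractionFreeSchur A₁₁ A₁₂ A₂₁ A₂₂).det =
      A₁₁.det ^ (Fintype.card n - 1) * (fromBlocks A₁₁ A₁₂ A₂₁ A₂₂).det :=
  hd.eq_iff.mp <| by
    rw [det_mul_det_fractionFreeSchur A₁₁ A₁₂ A₂₁ A₂₂ hd, ← mul_assoc, ← pow_succ',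
      Nat.sub_add_cancel Fintype.card_pos]

theorem smul_adjugate_fromBlocks_toBlocks₁₂ :
    A₁₁.det • (fromBlocks A₁₁ A₁₂ A₂₁ A₂₂).adjugate.toBlocks₁₂ =
      -(A₁₁.adjugate * A₁₂ * (fromBlocks A₁₁ A₁₂ A₂₁ A₂₂).adjugate.toBlocks₂₂) := by
  set B := (fromBlocks A₁₁ A₁₂ A₂₁ A₂₂).adjugate
  have h := (right_blocks_of_fromBlocks_mul_eq_smul_one
    (mul_adjugate (fromBlocks A₁₁ A₁₂ A₂₁ A₂₂))).1
  calc A₁₁.det • B.toBlocks₁₂ = A₁₁.adjugate * (A₁₁ * B.toBlocks₁₂) := by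
        rw [← Matrix.mul_assoc, adjugate_mul, Matrix.smul_mul, Matrix.one_mul]
    _ = -(A₁₁.adjugate * A₁₂ * B.toBlocks₂₂) := by
        rw [eq_neg_of_add_eq_zero_left h, Matrix.mul_neg, Matrix.mul_assoc]

theorem fractionFreeSchur_mul_adjugate_fromBlocks_toBlocks₂₂ :
    fractionFreeSchur A₁₁ A₁₂ A₂₁ A₂₂ * (fromBlocks A₁₁ A₁₂ A₂₁ A₂₂).adjugate.toBlocks₂₂ =
      (A₁₁.det * (fromBlocks A₁₁ A₁₂ A₂₁ A₂₂).det) • 1 := by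
  set B := (fromBlocks A₁₁ A₁₂ A₂₁ A₂₂).adjugate
  have h := (right_blocks_of_fromBlocks_mul_eq_smul_one
    (mul_adjugate (fromBlocks A₁₁ A₁₂ A₂₁ A₂₂))).2
  calc fractionFreeSchur A₁₁ A₁₂ A₂₁ A₂₂ * B.toBlocks₂₂
      = A₁₁.det • (A₂₂ * B.toBlocks₂₂) - A₂₁ * (A₁₁.adjugate * A₁₂ * B.toBlocks₂₂) := by
        simp only [fractionFreeSchur, Matrix.sub_mul, Matrix.smul_mul, Matrix.mul_assoc]
    _ = A₁₁.det • (A₂₁ * B.toBlocks₁₂ + A₂₂ * B.toBlocks₂₂) := by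
        rw [← neg_neg (A₁₁.adjugate * A₁₂ * B.toBlocks₂₂), ← smul_adjugate_fromBlocks_toBlocks₁₂,
          Matrix.mul_neg, sub_neg_eq_add, Matrix.mul_smul, smul_add, add_comm]
    _ = (A₁₁.det * (fromBlocks A₁₁ A₁₂ A₂₁ A₂₂).det) • 1 := by rw [h, smul_smul]

variable [Nonempty n]

theorem pow_smul_adjugate_fromBlocks_toBlocks₂₂ (hd : IsLeftRegular A₁₁.det)
    (hA : IsLeftRegular (fromBlocks A₁₁ A₁₂ A₂₁ A₂₂).det) :
    A₁₁.det ^ (Fintype.card n - 1) • (fromBlocks A₁₁ A₁₂ A₂₁ A₂₂).adjugate.toBlocks₂₂ =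
      A₁₁.det • (fractionFreeSchur A₁₁ A₁₂ A₂₁ A₂₂).adjugate := by
  set Δ := fractionFreeSchur A₁₁ A₁₂ A₂₁ A₂₂
  set B := (fromBlocks A₁₁ A₁₂ A₂₁ A₂₂).adjugate
  apply hA.matrix
  calc (fromBlocks A₁₁ A₁₂ A₂₁ A₂₂).det • A₁₁.det ^ (Fintype.card n - 1) • B.toBlocks₂₂
      = Δ.det • B.toBlocks₂₂ := by rw [det_fractionFreeSchur _ _ _ _ hd, smul_smul, mul_comm]
    _ = Δ.adjugate * (Δ * B.toBlocks₂₂) := by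
        rw [← Matrix.mul_assoc, adjugate_mul, Matrix.smul_mul, Matrix.one_mul]
    _ = (fromBlocks A₁₁ A₁₂ A₂₁ A₂₂).det • A₁₁.det • Δ.adjugate := by
        rw [fractionFreeSchur_mul_adjugate_fromBlocks_toBlocks₂₂, Matrix.mul_smul, Matrix.mul_one,
          mul_comm, smul_smul]

theorem pow_smul_adjugate_fromBlocks_toBlocks₁₂_of_isLeftRegular (hd : IsLeftRegular A₁₁.det)
    (hA : IsLeftRegular (fromBlocks A₁₁ A₁₂ A₂₁ A₂₂).det) :
    A₁₁.det ^ (Fintype.card n - 1) • (fromBlocks A₁₁ A₁₂ A₂₁ A₂₂).adjugate.toBlocks₁₂ =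
      -(A₁₁.adjugate * A₁₂ * (fractionFreeSchur A₁₁ A₁₂ A₂₁ A₂₂).adjugate) := by
  apply hd.matrix
  calc A₁₁.det • A₁₁.det ^ (Fintype.card n - 1) • (fromBlocks A₁₁ A₁₂ A₂₁ A₂₂).adjugate.toBlocks₁₂
      = -(A₁₁.adjugate * A₁₂ *
          (A₁₁.det ^ (Fintype.card n - 1) • (fromBlocks A₁₁ A₁₂ A₂₁ A₂₂).adjugate.toBlocks₂₂)) := by
        rw [smul_comm, smul_adjugate_fromBlocks_toBlocks₁₂, smul_neg, Matrix.mul_smul]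
    _ = A₁₁.det • -(A₁₁.adjugate * A₁₂ * (fractionFreeSchur A₁₁ A₁₂ A₂₁ A₂₂).adjugate) := by
        rw [pow_smul_adjugate_fromBlocks_toBlocks₂₂ _ _ _ _ hd hA, Matrix.mul_smul, smul_neg]

end

section

variable {S : Type*} [CommRing S] (f : R →+* S) (A₁₁ A₁₂ A₂₁ A₂₂ : Matrix n n R)

theorem fractionFreeSchur_map :
    (fractionFreeSchur A₁₁ A₁₂ A₂₁ A₂₂).map f =
      fractionFreeSchur (A₁₁.map f) (A₁₂.map f) (A₂₁.map f) (A₂₂.map f) := by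
  have hadj : A₁₁.adjugate.map f = (A₁₁.map f).adjugate := f.map_adjugate A₁₁
  rw [fractionFreeSchur, fractionFreeSchur, Matrix.map_sub _ (map_sub f), Matrix.map_mul,
    Matrix.map_mul, Matrix.map_smul' _ _ _ (map_mul f), hadj, f.map_det]
  rfl

theorem map_pow_smul_adjugate_fromBlocks_toBlocks₁₂ (k : ℕ) :
    (A₁₁.det ^ k • (fromBlocks A₁₁ A₁₂ A₂₁ A₂₂).adjugate.toBlocks₁₂).map f =
      (A₁₁.map f).det ^ k •
        (fromBlocks (A₁₁.map f) (A₁₂.map f) (A₂₁.map f) (A₂₂.map f)).adjugate.toBlocks₁₂ := by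
  have hadj : (fromBlocks A₁₁ A₁₂ A₂₁ A₂₂).adjugate.map f =
      ((fromBlocks A₁₁ A₁₂ A₂₁ A₂₂).map f).adjugate :=
    f.map_adjugate _
  rw [Matrix.map_smul' _ _ _ (map_mul f), map_pow, f.map_det, ← fromBlocks_map, ← hadj]
  rfl

theorem map_neg_adjugate_mul_mul_adjugate_fractionFreeSchur :
    (-(A₁₁.adjugate * A₁₂ * (fractionFreeSchur A₁₁ A₁₂ A₂₁ A₂₂).adjugate)).map f =
      -((A₁₁.map f).adjugate * A₁₂.map f *
        (fractionFreeSchur (A₁₁.map f) (A₁₂.map f) (A₂₁.map f) (A₂₂.map f)).adjugate) := by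
  have hadj : ∀ M : Matrix n n R, M.adjugate.map f = (M.map f).adjugate := f.map_adjugate
  rw [Matrix.map_neg _ (map_neg f), Matrix.map_mul, Matrix.map_mul, hadj, hadj,
    fractionFreeSchur_map]

end

theorem det_toBlocks₁₁_mvPolynomialX_ne_zero_s3 {m o : Type*} [Fintype m] [DecidableEq m]
    [Fintype o] [DecidableEq o] [Nontrivial R] :
    (mvPolynomialX (m ⊕ o) (m ⊕ o) R).toBlocks₁₁.det ≠ 0 := by
  set X := mvPolynomialX (m ⊕ o) (m ⊕ o) R
  set ψ := MvPolynomial.aeval (R := R)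
    fun p : (m ⊕ o) × (m ⊕ o) => (1 : Matrix (m ⊕ o) (m ⊕ o) R) p.1 p.2
  have hX : X.map ψ = 1 := mvPolynomialX_mapMatrix_aeval R 1
  rw [← fromBlocks_toBlocks X, fromBlocks_map, ← fromBlocks_one, fromBlocks_inj] at hX
  intro h
  simpa [h, hX.1] using ψ.map_det X.toBlocks₁₁

theorem pow_smul_adjugate_fromBlocks_toBlocks₁₂ [Nonempty n] (A₁₁ A₁₂ A₂₁ A₂₂ : Matrix n n R) :
    A₁₁.det ^ (Fintype.card n - 1) • (fromBlocks A₁₁ A₁₂ A₂₁ A₂₂).adjugate.toBlocks₁₂ =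
      -(A₁₁.adjugate * A₁₂ * (fractionFreeSchur A₁₁ A₁₂ A₂₁ A₂₂).adjugate) := by
  set X := mvPolynomialX (n ⊕ n) (n ⊕ n) ℤ
  set φ := MvPolynomial.eval₂Hom (Int.castRingHom R)
    fun p : (n ⊕ n) × (n ⊕ n) => fromBlocks A₁₁ A₁₂ A₂₁ A₂₂ p.1 p.2
  have hX : X.map φ = fromBlocks A₁₁ A₁₂ A₂₁ A₂₂ := mvPolynomialX_map_eval₂ _ _
  rw [← fromBlocks_toBlocks X, fromBlocks_map, fromBlocks_inj] at hX
  obtain ⟨h₁₁, h₁₂, h₂₁, h₂₂⟩ := hX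
  have generic := pow_smul_adjugate_fromBlocks_toBlocks₁₂_of_isLeftRegular
    X.toBlocks₁₁ X.toBlocks₁₂ X.toBlocks₂₁ X.toBlocks₂₂
    (IsRegular.of_ne_zero det_toBlocks₁₁_mvPolynomialX_ne_zero_s3).left
    (by rw [fromBlocks_toBlocks]; exact (IsRegular.of_ne_zero (det_mvPolynomialX_ne_zero _ ℤ)).left)
  have := congrArg (Matrix.map · φ) generic
  rwa [map_pow_smul_adjugate_fromBlocks_toBlocks₁₂,
    map_neg_adjugate_mul_mul_adjugate_fractionFreeSchur, h₁₁, h₁₂, h₂₁, h₂₂] at this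

end Matrix

/-- For a commutative ring `R`, `m ≥ 1`, and a `2m × 2m` matrix `A` over `R`
with `m × m` blocks `A11, A12, A21, A22`, letting
`Δ = det(A11) • A22 - A21 * adj(A11) * A12`, the top-right block `B12` of `adj(A)`
satisfies `det(A11) ^ (m - 1) • B12 = - adj(A11) * A12 * adj(Δ)`. -/
theorem ffSchur_adjugate_block12 {R : Type*} [CommRing R] (m : ℕ) (hm : 1 ≤ m)
    (A11 A12 A21 A22 : Matrix (Fin m) (Fin m) R) :
    A11.det ^ (m - 1) • (Matrix.fromBlocks A11 A12 A21 A22).adjugate.toBlocks₁₂ =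
      -(A11.adjugate * A12 * (A11.det • A22 - A21 * A11.adjugate * A12).adjugate) := by
  have : Nonempty (Fin m) := Fin.pos_iff_nonempty.mp hm
  have h := Matrix.pow_smul_adjugate_fromBlocks_toBlocks₁₂ A11 A12 A21 A22
  rwa [Fintype.card_fin] at h
end

section
/- Let R be a commutative ring, σ a type, and let n = 2^m with m ≥ 1. Let A be an n×n matrix over MvPolynomial σ R such that every entry of A has total degree at most d. Then for all 0 ≤ k ≤ m−1, every entry of the adjugate matrix adj(Δ_k(A)) of the iterated fraction-free Schur complement Δ_k(A) has total degree at most n^(k+2) · d. -/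
/-- The fraction-free Schur complement `Δ(M) = det(M11) • M22 - M21 * adj(M11) * M12`
of a `2s × 2s` matrix `M`, where `M11, M12, M21, M22` are the `s × s` blocks
(top-left, top-right, bottom-left, bottom-right) of `M`. -/
def ffSchur {R : Type*} [CommRing R] {s : ℕ} (M : Matrix (Fin (2 * s)) (Fin (2 * s)) R) :
    Matrix (Fin s) (Fin s) R :=
  let top : Fin s → Fin (2 * s) := fun a => ⟨a.1, by have := a.2; omega⟩
  let bot : Fin s → Fin (2 * s) := fun a => ⟨s + a.1, by have := a.2; omega⟩
  let M11 := M.submatrix top top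
  let M12 := M.submatrix top bot
  let M21 := M.submatrix bot top
  let M22 := M.submatrix bot bot
  M11.det • M22 - M21 * M11.adjugate * M12

/-- Reindexing a square matrix along an equality of sizes. -/
def castMat {R : Type*} {a b : ℕ} (h : a = b) (M : Matrix (Fin a) (Fin a) R) :
    Matrix (Fin b) (Fin b) R :=
  M.submatrix (Fin.cast h.symm) (Fin.cast h.symm)

/-- The fraction-free Schur complement of a matrix of size `2 ^ (t + 1)`,
a matrix of size `2 ^ t`. -/
def ffSchurPow {R : Type*} [CommRing R] (t : ℕ)
    (M : Matrix (Fin (2 ^ (t + 1))) (Fin (2 ^ (t + 1))) R) :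
    Matrix (Fin (2 ^ t)) (Fin (2 ^ t)) R :=
  ffSchur (castMat (by rw [pow_succ]; ring) M)

/-- The iterated fraction-free Schur complement: `ffSchurIter k t M` is
`Δ_k(M) = Δ(Δ(⋯Δ(M)⋯))` (`k + 1` applications of `Δ`), taking a matrix of size
`2 ^ (t + 1 + k)` to a matrix of size `2 ^ t`. -/
def ffSchurIter {R : Type*} [CommRing R] :
    (k t : ℕ) → Matrix (Fin (2 ^ (t + 1 + k))) (Fin (2 ^ (t + 1 + k))) R →
      Matrix (Fin (2 ^ t)) (Fin (2 ^ t)) R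
  | 0, t, M => ffSchurPow t M
  | k + 1, t, M => ffSchurIter k t (ffSchurPow (t + 1 + k) M)


/-!
If the entries of `M` (of size `2s`) have total degree `≤ e`, those of `Δ(M)` have total degree
`≤ (s + 1) e`: `det M₁₁` has degree `≤ s e`, and an entry of `adj M₁₁` is a minor of size
`s - 1`. So each of the `k + 1` Schur complements multiplies the degree bound by at most the size
of the matrix it is applied to, which is at most `n`, and the adjugate of `Δ_k(A)` contributes
one more factor `n`.
-/

open MvPolynomial Matrix

section

variable {R : Type*} {σ : Type*}

theorem Matrix.totalDegree_mul_apply_le [CommSemiring R] {l m n : Type*} [Fintype m]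
    (A : Matrix l m (MvPolynomial σ R)) (B : Matrix m n (MvPolynomial σ R)) {a b : ℕ}
    (hA : ∀ i j, (A i j).totalDegree ≤ a) (hB : ∀ i j, (B i j).totalDegree ≤ b) (i : l) (j : n) :
    ((A * B) i j).totalDegree ≤ a + b :=
  totalDegree_finsetSum_le fun _ _ =>
    (totalDegree_mul _ _).trans (add_le_add (hA _ _) (hB _ _))

variable [CommRing R]

namespace Matrix

theorem totalDegree_det_le {n : Type*} [Fintype n] [DecidableEq n]
    (M : Matrix n n (MvPolynomial σ R)) {e : ℕ} (h : ∀ i j, (M i j).totalDegree ≤ e) :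
    M.det.totalDegree ≤ Fintype.card n * e := by
  rw [det_apply]
  refine totalDegree_finsetSum_le fun τ _ => ?_
  refine (totalDegree_smul_le _ _).trans ((totalDegree_finsetProd _ _).trans ?_)
  calc ∑ i, (M (τ i) i).totalDegree ≤ ∑ _i : n, e := Finset.sum_le_sum fun _ _ => h _ _
    _ = Fintype.card n * e := by rw [Finset.sum_const, smul_eq_mul, Finset.card_univ]

theorem totalDegree_adjugate_le {n : ℕ} (M : Matrix (Fin n) (Fin n) (MvPolynomial σ R)) {e : ℕ}
    (h : ∀ i j, (M i j).totalDegree ≤ e) (i j : Fin n) :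
    (M.adjugate i j).totalDegree ≤ (n - 1) * e := by
  obtain _ | n := n
  · exact i.elim0
  have hminor := totalDegree_det_le (M.submatrix j.succAbove i.succAbove) fun _ _ => h _ _
  rw [Fintype.card_fin] at hminor
  rw [adjugate_fin_succ_eq_det_submatrix, Nat.add_sub_cancel]
  rcases neg_one_pow_eq_or (MvPolynomial σ R) (j + i : ℕ) with hsign | hsign <;>
    simpa [hsign, totalDegree_neg] using hminor

end Matrix

theorem totalDegree_ffSchur_le {s : ℕ} (M : Matrix (Fin (2 * s)) (Fin (2 * s)) (MvPolynomial σ R))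
    {e : ℕ} (h : ∀ i j, (M i j).totalDegree ≤ e) (i j : Fin s) :
    (ffSchur M i j).totalDegree ≤ (s + 1) * e := by
  have hs : 1 ≤ s := Nat.one_le_of_lt i.pos
  simp only [ffSchur, Matrix.sub_apply, Matrix.smul_apply, smul_eq_mul]
  refine (totalDegree_sub _ _).trans (max_le ?_ ?_)
  · refine (totalDegree_mul _ _).trans
      ((add_le_add (totalDegree_det_le _ fun _ _ => h _ _) (h _ _)).trans_eq ?_)
    rw [Fintype.card_fin, add_one_mul]
  · refine (totalDegree_mul_apply_le _ _ (totalDegree_mul_apply_le _ _ (fun _ _ => h _ _)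
      (totalDegree_adjugate_le _ fun _ _ => h _ _)) (fun _ _ => h _ _) i j).trans_eq ?_
    zify [hs]
    ring

theorem totalDegree_ffSchurPow_le (t : ℕ)
    (M : Matrix (Fin (2 ^ (t + 1))) (Fin (2 ^ (t + 1))) (MvPolynomial σ R)) {e : ℕ}
    (h : ∀ i j, (M i j).totalDegree ≤ e) (i j : Fin (2 ^ t)) :
    (ffSchurPow t M i j).totalDegree ≤ 2 ^ (t + 1) * e := by
  refine (totalDegree_ffSchur_le _ (fun _ _ => h _ _) i j).trans (Nat.mul_le_mul_right e ?_)
  rw [pow_succ, mul_two]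
  exact Nat.add_le_add_left Nat.one_le_two_pow _

theorem totalDegree_ffSchurIter_le (k t : ℕ)
    (M : Matrix (Fin (2 ^ (t + 1 + k))) (Fin (2 ^ (t + 1 + k))) (MvPolynomial σ R)) {e : ℕ}
    (h : ∀ i j, (M i j).totalDegree ≤ e) (i j : Fin (2 ^ t)) :
    (ffSchurIter k t M i j).totalDegree ≤ (2 ^ (t + 1 + k)) ^ (k + 1) * e := by
  induction k generalizing e with
  | zero => simpa [ffSchurIter] using totalDegree_ffSchurPow_le t M h i j
  | succ k ih =>
    refine (ih _ (totalDegree_ffSchurPow_le (t + 1 + k) M h)).trans ?_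
    rw [pow_succ _ (k + 1), mul_assoc]
    exact Nat.mul_le_mul (Nat.pow_le_pow_left (Nat.pow_le_pow_right two_pos (by omega)) _) le_rfl

end

/-- Let `n = 2 ^ m` with `m ≥ 1`, and let `A` be an `n × n` matrix of
multivariate polynomials of total degree at most `d`.  Then for all `0 ≤ k ≤ m - 1`, every
entry of the adjugate of the iterated fraction-free Schur complement `Δ_k(A)` has total
degree at most `n ^ (k + 2) * d`. -/
theorem totalDegree_adjugate_ffSchurIter_le {R : Type*} [CommRing R] {σ : Type*} (m d : ℕ)
    (hm : 1 ≤ m) (A : Matrix (Fin (2 ^ m)) (Fin (2 ^ m)) (MvPolynomial σ R))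
    (hA : ∀ i j, (A i j).totalDegree ≤ d) (k : ℕ) (hk : k ≤ m - 1) :
    ∀ i j, (((ffSchurIter k (m - 1 - k)
          (castMat (by rw [show m - 1 - k + 1 + k = m from by omega]) A)).adjugate) i j).totalDegree ≤
      (2 ^ m) ^ (k + 2) * d := by
  intro i j
  have hsize : m - 1 - k + 1 + k = m := by omega
  have hSchur := totalDegree_ffSchurIter_le k (m - 1 - k) (castMat (by rw [hsize]) A)
    fun _ _ => hA _ _
  refine (totalDegree_adjugate_le _ hSchur i j).trans ?_
  rw [hsize]
  calc (2 ^ (m - 1 - k) - 1) * ((2 ^ m) ^ (k + 1) * d)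
      ≤ 2 ^ m * ((2 ^ m) ^ (k + 1) * d) :=
        Nat.mul_le_mul_right _ ((Nat.sub_le _ _).trans (Nat.pow_le_pow_right two_pos (by omega)))
    _ = (2 ^ m) ^ (k + 2) * d := by ring
end
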